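/- arXiv:math/9202209 — 6 statements merged into one kernel-verified Lean document; each statement's English description precedes it below -/
import Mathlib

section
/- Fix ν ≥ 2 and a sequence b : ℕ → ℝ with 0 < b(n) ≤ 1/ν for all n. Define 2×2 matrices B(n) with first row ((1 − b(n))/(ν − 1), b(n−1)) and second row (1, 0) (for n ≥ 1). Then the set of all finite products B(n) · B(n−1) · ⋯ · B(1) is bounded: every entry of every such product is at most 2. -/
/-!
Each column `(x, y)` of a partial product `B(m) ⋯ B(1)` stays in the trapezoid
`0 ≤ x, 0 ≤ y ≤ 1, x + b(m) y ≤ 1`: the next factor sends it to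
`(a x + b(m) y, x)` with `a = (1 - b(m+1))/(ν - 1)`, and `a + b(m+1) ≤ 1` because `ν - 1 ≥ 1`.
Starting from the identity, every entry of every product is therefore at most `1`.
-/

open Matrix

def trapezoid (β : ℝ) : Set (Fin 2 → ℝ) :=
  {v | 0 ≤ v 0 ∧ 0 ≤ v 1 ∧ v 1 ≤ 1 ∧ v 0 + β * v 1 ≤ 1}

lemma single_mem_trapezoid {β : ℝ} (hβ : β ≤ 1) (j : Fin 2) :
    (Pi.single j 1 : Fin 2 → ℝ) ∈ trapezoid β := by
  fin_cases j <;> simp [trapezoid, hβ]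

lemma le_one_of_mem_trapezoid {β : ℝ} {v : Fin 2 → ℝ} (hβ : 0 ≤ β) (hv : v ∈ trapezoid β)
    (i : Fin 2) : v i ≤ 1 := by
  obtain ⟨_, hy, hy1, hxy⟩ := hv
  revert i
  exact Fin.forall_fin_two.2 ⟨by nlinarith, hy1⟩

lemma companion_mulVec_mem_trapezoid {a β β' : ℝ} {v : Fin 2 → ℝ} (ha : 0 ≤ a) (hβ : 0 ≤ β)
    (hab : a + β' ≤ 1) (hv : v ∈ trapezoid β) : !![a, β; 1, 0] *ᵥ v ∈ trapezoid β' := by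
  have hmul : !![a, β; 1, 0] *ᵥ v = ![a * v 0 + β * v 1, v 0] := by
    ext i; fin_cases i <;> simp [mulVec, dotProduct, Fin.sum_univ_two]
  obtain ⟨hx, hy, -, hxy⟩ := hv
  simp only [hmul, trapezoid, Set.mem_ofPred_eq, cons_val_zero, cons_val_one]
  exact ⟨by positivity, hx, by nlinarith, by nlinarith⟩

lemma List.prod_map_range_sub_succ {M : Type*} [Monoid M] (f : ℕ → M) (m : ℕ) :
    ((List.range (m + 1)).map fun k => f (m + 1 - k)).prod =
      f (m + 1) * ((List.range m).map fun k => f (m - k)).prod := by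
  rw [List.prod_range_succ']
  simp only [Nat.sub_zero, Nat.succ_sub_succ]

theorem prod_companion_mulVec_mem_trapezoid {a b : ℕ → ℝ} {B : ℕ → Matrix (Fin 2) (Fin 2) ℝ}
    (ha : ∀ n, 0 ≤ a n) (hb : ∀ n, 0 ≤ b n) (hab : ∀ n, a n + b n ≤ 1)
    (hB : ∀ n, B (n + 1) = !![a (n + 1), b n; 1, 0]) {v : Fin 2 → ℝ} (hv : v ∈ trapezoid (b 0))
    (n : ℕ) : ((List.range n).map fun k => B (n - k)).prod *ᵥ v ∈ trapezoid (b n) := by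
  induction n with
  | zero => simpa using hv
  | succ m ih =>
    rw [List.prod_map_range_sub_succ, ← mulVec_mulVec, hB]
    exact companion_mulVec_mem_trapezoid (ha _) (hb m) (hab _) ih

theorem stmt_3 (ν : ℝ) (hν : 2 ≤ ν) (b : ℕ → ℝ)
    (hb : ∀ n, 0 < b n ∧ b n ≤ 1 / ν)
    (B : ℕ → Matrix (Fin 2) (Fin 2) ℝ)
    (hB : ∀ n, B n = !![(1 - b n) / (ν - 1), b (n - 1); 1, 0]) :
    ∀ n ≥ 1, ∀ i j,
      (((List.range n).map fun k => B (n - k)).prod) i j ≤ 2 := by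
  intro n _ i j
  have hb_le_one n : b n ≤ 1 :=
    (hb n).2.trans ((div_le_one (by linarith)).2 (by linarith))
  have ha n : 0 ≤ (1 - b n) / (ν - 1) := div_nonneg (by linarith [hb_le_one n]) (by linarith)
  have hab n : (1 - b n) / (ν - 1) + b n ≤ 1 := by
    linarith [div_le_self (by linarith [hb_le_one n] : 0 ≤ 1 - b n) (by linarith : 1 ≤ ν - 1)]
  have hcol := prod_companion_mulVec_mem_trapezoid (B := B) ha (fun n => (hb n).1.le) hab
    (fun n => by rw [hB, Nat.add_sub_cancel]) (single_mem_trapezoid (hb_le_one 0) j) n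
  rw [mulVec_single_one] at hcol
  have := le_one_of_mem_trapezoid (hb n).1.le hcol i
  rw [col_apply] at this
  linarith
end

section
/- Let ν > 2 and let b : ℕ → ℝ be a sequence with 0 < b(n) ≤ 1/ν. Define 2×2 matrices B(n) with rows ((1 − b(n))/(ν − 1), b(n−1)) and (1, 0). Then there exists an integer N, depending only on ν, such that for every m and every n ≥ N, each entry of the product B(m+n) ⬝ B(m+n−1) ⬝ ⋯ ⬝ B(m+1) is at most 0.4, and hence this product contracts the Euclidean norm on ℝ² by a factor at most 0.8. -/
noncomputable def prodB6 (B : ℕ → Matrix (Fin 2) (Fin 2) ℝ) (m n : ℕ) :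
    Matrix (Fin 2) (Fin 2) ℝ :=
  ((List.range n).map fun k => B (m + n - k)).prod

lemma prodB6_zero (B : ℕ → Matrix (Fin 2) (Fin 2) ℝ) (m : ℕ) : prodB6 B m 0 = 1 := rfl

lemma prodB6_succ (B : ℕ → Matrix (Fin 2) (Fin 2) ℝ) (m n : ℕ) :
    prodB6 B m (n + 1) = B (m + n + 1) * prodB6 B m n := by
  unfold prodB6
  rw [List.range_succ_eq_map]
  simp only [List.map_cons, List.map_map, List.prod_cons, Function.comp]
  have h1 : m + (n + 1) - 0 = m + n + 1 := by omega
  rw [h1]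
  have h2 : ((fun k => B (m + (n + 1) - k)) ∘ Nat.succ) = fun k => B (m + n - k) := by
    funext k
    have h3 : m + (n + 1) - Nat.succ k = m + n - k := by omega
    simp only [Function.comp_apply, h3]
  rw [h2]

set_option maxHeartbeats 800000 in

lemma normlem6 (A : Matrix (Fin 2) (Fin 2) ℝ) (h : ∀ i j, |A i j| ≤ 0.4)
    (v : EuclideanSpace ℝ (Fin 2)) :
    ‖Matrix.toEuclideanLin A v‖ ≤ 0.8 * ‖v‖ := by
  have happ : ∀ i : Fin 2, (Matrix.toEuclideanLin A v) i = A i 0 * v 0 + A i 1 * v 1 := by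
    intro i
    rw [Matrix.toEuclideanLin_apply]
    simp [Matrix.mulVec, dotProduct, Fin.sum_univ_two]
  have hnormA : ‖Matrix.toEuclideanLin A v‖ ^ 2 ≤ (0.8 * ‖v‖) ^ 2 := by
    rw [EuclideanSpace.norm_eq, EuclideanSpace.norm_eq (𝕜 := ℝ) v,
      Real.sq_sqrt (by positivity), mul_pow, Real.sq_sqrt (by positivity)]
    simp only [Fin.sum_univ_two, happ, Real.norm_eq_abs, sq_abs]
    have h00 := abs_le.mp (h 0 0)
    have h01 := abs_le.mp (h 0 1)
    have h10 := abs_le.mp (h 1 0)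
    have h11 := abs_le.mp (h 1 1)
    have ha2 : A 0 0 ^ 2 ≤ 0.16 := by nlinarith
    have hc2 : A 0 1 ^ 2 ≤ 0.16 := by nlinarith
    have hd2 : A 1 0 ^ 2 ≤ 0.16 := by nlinarith
    have he2 : A 1 1 ^ 2 ≤ 0.16 := by nlinarith
    have c1 : (A 0 0 * v 0 + A 0 1 * v 1) ^ 2
        ≤ (A 0 0 ^ 2 + A 0 1 ^ 2) * (v 0 ^ 2 + v 1 ^ 2) := by
      nlinarith [sq_nonneg (A 0 0 * v 1 - A 0 1 * v 0)]
    have c2 : (A 1 0 * v 0 + A 1 1 * v 1) ^ 2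
        ≤ (A 1 0 ^ 2 + A 1 1 ^ 2) * (v 0 ^ 2 + v 1 ^ 2) := by
      nlinarith [sq_nonneg (A 1 0 * v 1 - A 1 1 * v 0)]
    have S0 : (0:ℝ) ≤ v 0 ^ 2 + v 1 ^ 2 := by positivity
    have d1 : (A 0 0 ^ 2 + A 0 1 ^ 2) * (v 0 ^ 2 + v 1 ^ 2)
        ≤ 0.32 * (v 0 ^ 2 + v 1 ^ 2) := by nlinarith
    have d2 : (A 1 0 ^ 2 + A 1 1 ^ 2) * (v 0 ^ 2 + v 1 ^ 2)
        ≤ 0.32 * (v 0 ^ 2 + v 1 ^ 2) := by nlinarith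
    have hnum : (0.8:ℝ) ^ 2 = 0.64 := by norm_num
    rw [hnum]
    linarith only [c1, c2, d1, d2]
  have h1 : 0 ≤ ‖Matrix.toEuclideanLin A v‖ := norm_nonneg _
  have h2 : 0 ≤ 0.8 * ‖v‖ := by positivity
  nlinarith

set_option maxHeartbeats 1000000 in
theorem stmt_6 (ν : ℝ) (hν : 2 < ν) (b : ℕ → ℝ)
    (hb : ∀ n, 0 < b n ∧ b n ≤ 1 / ν)
    (B : ℕ → Matrix (Fin 2) (Fin 2) ℝ)
    (hB : ∀ n, B n = !![(1 - b n) / (ν - 1), b (n - 1); 1, 0]) :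
    ∃ N : ℕ, ∀ m : ℕ, ∀ n ≥ N,
      (∀ i j, (((List.range n).map fun k => B (m + n - k)).prod) i j ≤ 0.4) ∧
      (∀ v : EuclideanSpace ℝ (Fin 2),
        ‖Matrix.toEuclideanLin (((List.range n).map fun k => B (m + n - k)).prod) v‖
          ≤ 0.8 * ‖v‖) := by
  have hν0 : (0:ℝ) < ν := by linarith
  have hν1 : (0:ℝ) < ν - 1 := by linarith
  have hν2 : (0:ℝ) ≤ ν - 2 := by linarith
  -- basic facts about b
  have hbν : ∀ k, b k * ν ≤ 1 := by
    intro k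
    have h := (hb k).2
    calc b k * ν ≤ (1/ν) * ν := by nlinarith
    _ = 1 := by field_simp
  have hb0 : ∀ k, 0 < b k := fun k => (hb k).1
  have hb1 : ∀ k, b k < 1 := by
    intro k
    nlinarith [hbν k, hb0 k]
  -- a k
  have ha0 : ∀ k, 0 ≤ (1 - b k) / (ν - 1) := by
    intro k
    apply div_nonneg (by linarith [hb1 k]) (le_of_lt hν1)
  have hkey1 : ∀ k, (1 - b k) / (ν - 1) + (ν - 1) * b k ≤ 1 := by
    intro k
    rw [div_add' _ _ _ (ne_of_gt hν1), div_le_one hν1]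
    nlinarith [hbν k]
  have hkey2 : ∀ k, (1 - b k) / (ν - 1) + b k ≤ 2 / ν := by
    intro k
    rw [div_add' _ _ _ (ne_of_gt hν1), div_le_div_iff₀ hν1 hν0]
    nlinarith [hbν k]
  -- the contraction factor
  set θ : ℝ := max (2 / ν) (1 / (ν - 1)) with hθdef
  have hθ0 : 0 ≤ θ := le_trans (by positivity) (le_max_left _ _)
  have hθ1 : θ < 1 := by
    apply max_lt
    · rw [div_lt_one hν0]; linarith
    · rw [div_lt_one hν1]; linarith
  obtain ⟨K, hK⟩ : ∃ K : ℕ, θ ^ K < 0.1 := exists_pow_lt_of_lt_one (by norm_num) hθ1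
  refine ⟨2 * K + 1, ?_⟩
  intro m n hn
  set Q : ℕ → Matrix (Fin 2) (Fin 2) ℝ := prodB6 B m with hQdef
  clear_value Q
  -- recursion for entries
  have hQ1 : ∀ p (j : Fin 2), Q (p + 1) 1 j = Q p 0 j := by
    intro p j
    rw [hQdef, prodB6_succ, hB]
    simp [Matrix.mul_apply, Fin.sum_univ_two]
  have hQ0 : ∀ p (j : Fin 2),
      Q (p + 1) 0 j = (1 - b (m + p + 1)) / (ν - 1) * Q p 0 j + b (m + p) * Q p 1 j := by
    intro p j
    rw [hQdef, prodB6_succ, hB]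
    have : m + p + 1 - 1 = m + p := by omega
    simp [Matrix.mul_apply, Fin.sum_univ_two, this]
  -- nonnegativity of entries
  have hpos : ∀ p (i j : Fin 2), 0 ≤ Q p i j := by
    intro p
    induction p with
    | zero =>
      intro i j
      rw [hQdef, prodB6_zero]
      rw [Matrix.one_apply]
      split <;> norm_num
    | succ p ih =>
      intro i j
      fin_cases i
      · show 0 ≤ Q (p + 1) 0 j
        rw [hQ0 p j]
        have := ha0 (m + p + 1)
        have := hb0 (m + p)
        nlinarith [ih 0 j, ih 1 j]
      · show 0 ≤ Q (p + 1) 1 j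
        rw [hQ1 p j]; exact ih 0 j
  -- the Lyapunov function
  set V : Fin 2 → ℕ → ℝ := fun j p => Q p 0 j + (ν - 1) * b (m + p) * Q p 1 j with hVdef
  clear_value V
  have hVlb : ∀ j p, Q p 0 j ≤ V j p := by
    intro j p
    have h1 := hb0 (m + p)
    have h2 := hpos p 1 j
    simp only [hVdef]
    nlinarith [mul_nonneg (mul_nonneg hν1.le h1.le) h2]
  have hstep : ∀ j p, V j (p + 1) ≤ V j p := by
    intro j p
    have e0 := hQ0 p j
    have e1 := hQ1 p j
    have hk := hkey1 (m + p + 1)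
    have hu := hpos p 0 j
    have hv := hpos p 1 j
    have hbp := hb0 (m + p)
    have : V j (p + 1) = ((1 - b (m + p + 1)) / (ν - 1) + (ν - 1) * b (m + p + 1)) * Q p 0 j
        + b (m + p) * Q p 1 j := by
      simp only [hVdef]
      rw [e0, e1]
      have : m + (p + 1) = m + p + 1 := by omega
      rw [this]; ring
    rw [this]
    have h1 : ((1 - b (m + p + 1)) / (ν - 1) + (ν - 1) * b (m + p + 1)) * Q p 0 j ≤ Q p 0 j := by
      nlinarith
    have h2 : b (m + p) * Q p 1 j ≤ (ν - 1) * b (m + p) * Q p 1 j := by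
      nlinarith [mul_nonneg (mul_nonneg hν2 hbp.le) hv]
    simp only [hVdef]
    linarith
  have hcontr : ∀ j p, V j (p + 2) ≤ θ * V j p := by
    intro j p
    have e0 := hQ0 p j
    have e1 := hQ1 p j
    have e0' := hQ0 (p + 1) j
    have e1' := hQ1 (p + 1) j
    have hu := hpos p 0 j
    have hv := hpos p 1 j
    have hu' := hpos (p + 1) 0 j
    have hbp := hb0 (m + p)
    have hbp1 := hb0 (m + p + 1)
    -- V (p+2) ≤ Q(p+1) 0 j + b(m+p+1) * Q(p+1) 1 j
    have step1 : V j (p + 2) ≤ Q (p + 1) 0 j + b (m + p + 1) * Q (p + 1) 1 j := by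
      have : V j (p + 2) = ((1 - b (m + p + 1 + 1)) / (ν - 1) + (ν - 1) * b (m + p + 1 + 1))
          * Q (p + 1) 0 j + b (m + p + 1) * Q (p + 1) 1 j := by
        simp only [hVdef]
        have h2 : m + (p + 2) = m + p + 1 + 1 := by omega
        have h1 : m + (p + 1) = m + p + 1 := by omega
        rw [h2]
        have e0'' : Q (p + 2) 0 j = (1 - b (m + p + 1 + 1)) / (ν - 1) * Q (p + 1) 0 j
            + b (m + p + 1) * Q (p + 1) 1 j := by
          have := hQ0 (p + 1) j
          rw [show p + 1 + 1 = p + 2 by omega, show m + (p+1) + 1 = m + p + 1 + 1 by omega,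
            show m + (p + 1) = m + p + 1 by omega] at this
          exact this
        have e1'' : Q (p + 2) 1 j = Q (p + 1) 0 j := by
          have := hQ1 (p + 1) j
          rw [show p + 1 + 1 = p + 2 by omega] at this
          exact this
        rw [e0'', e1'']; ring
      rw [this]
      nlinarith [hkey1 (m + p + 1 + 1)]
    -- substitute one more step
    have step2 : Q (p + 1) 0 j + b (m + p + 1) * Q (p + 1) 1 j
        ≤ ((1 - b (m + p + 1)) / (ν - 1) + b (m + p + 1)) * Q p 0 j + b (m + p) * Q p 1 j := by
      rw [e0, e1]
      apply le_of_eq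
      ring
    have step3 : ((1 - b (m + p + 1)) / (ν - 1) + b (m + p + 1)) * Q p 0 j
        + b (m + p) * Q p 1 j ≤ θ * V j p := by
      have hk2 := hkey2 (m + p + 1)
      have ht1 : 2 / ν ≤ θ := le_max_left _ _
      have ht2 : 1 / (ν - 1) ≤ θ := le_max_right _ _
      have h1 : ((1 - b (m + p + 1)) / (ν - 1) + b (m + p + 1)) * Q p 0 j ≤ θ * Q p 0 j :=
        mul_le_mul_of_nonneg_right (le_trans hk2 ht1) hu
      have h2 : b (m + p) * Q p 1 j ≤ θ * ((ν - 1) * b (m + p) * Q p 1 j) := by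
        have : b (m + p) * Q p 1 j = (1 / (ν - 1)) * ((ν - 1) * b (m + p) * Q p 1 j) := by
          field_simp
        rw [this]
        have hnn : 0 ≤ (ν - 1) * b (m + p) * Q p 1 j := by
          apply mul_nonneg (mul_nonneg hν1.le hbp.le) hv
        exact mul_le_mul_of_nonneg_right ht2 hnn
      simp only [hVdef]
      have expand : θ * (Q p 0 j + (ν - 1) * b (m + p) * Q p 1 j)
          = θ * Q p 0 j + θ * ((ν - 1) * b (m + p) * Q p 1 j) := by ring
      rw [expand]
      linarith
    exact le_trans step1 (le_trans step2 step3)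
  -- V at 0 bounded by 2
  have hV0 : ∀ j : Fin 2, V j 0 ≤ 2 := by
    intro j
    have h1 : Q 0 0 j ≤ 1 := by
      rw [hQdef, prodB6_zero, Matrix.one_apply]; split <;> norm_num
    have h2 : Q 0 1 j ≤ 1 := by
      rw [hQdef, prodB6_zero, Matrix.one_apply]; split <;> norm_num
    have h3 : (ν - 1) * b m ≤ 1 := by nlinarith [hbν m, hb0 m]
    have h4 : 0 ≤ Q 0 1 j := hpos 0 1 j
    have h5 : 0 ≤ (ν - 1) * b m := by nlinarith [hb0 m]
    simp only [hVdef, Nat.add_zero]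
    nlinarith
  -- geometric decay along even steps
  have hgeo : ∀ (j : Fin 2) (k : ℕ), V j (2 * k) ≤ θ ^ k * 2 := by
    intro j k
    induction k with
    | zero => simpa using hV0 j
    | succ k ih =>
      have : 2 * (k + 1) = 2 * k + 2 := by omega
      rw [this]
      calc V j (2 * k + 2) ≤ θ * V j (2 * k) := hcontr j (2 * k)
      _ ≤ θ * (θ ^ k * 2) := mul_le_mul_of_nonneg_left ih hθ0
      _ = θ ^ (k + 1) * 2 := by ring
  have hmono : ∀ j : Fin 2, Antitone (V j) := fun j => antitone_nat_of_succ_le (hstep j)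
  have htop : ∀ (j : Fin 2) (p : ℕ), Q p 0 j ≤ θ ^ (p / 2) * 2 := by
    intro j p
    calc Q p 0 j ≤ V j p := hVlb j p
    _ ≤ V j (2 * (p / 2)) := hmono j (by omega)
    _ ≤ θ ^ (p / 2) * 2 := hgeo j (p / 2)
  -- entrywise bound
  have hentry : ∀ i j : Fin 2, Q n i j ≤ 0.4 := by
    intro i j
    have hKle : ∀ q : ℕ, K ≤ q → θ ^ q * 2 ≤ 0.4 := by
      intro q hq
      have := pow_le_pow_of_le_one hθ0 (le_of_lt hθ1) hq
      nlinarith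
    fin_cases i
    · show Q n 0 j ≤ 0.4
      exact le_trans (htop j n) (hKle (n / 2) (by omega))
    · show Q n 1 j ≤ 0.4
      obtain ⟨p, rfl⟩ : ∃ p, n = p + 1 := ⟨n - 1, by omega⟩
      rw [hQ1 p j]
      exact le_trans (htop j p) (hKle (p / 2) (by omega))
  have hQn : Q n = ((List.range n).map fun k => B (m + n - k)).prod := by
    rw [hQdef]; rfl
  rw [← hQn]
  refine ⟨hentry, ?_⟩
  -- norm bound
  intro v
  have habs : ∀ i j : Fin 2, |Q n i j| ≤ 0.4 := by
    intro i j
    rw [abs_le]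
    exact ⟨by linarith [hpos n i j], hentry i j⟩
  exact normlem6 (Q n) habs v
end

section
/- Let (s(n)) be a sequence of real numbers, (B(n)) a sequence of linear maps on ℝ², and ζ(n) = (s(n), s(n−1)) ∈ ℝ². Suppose there are constants C > 0, N ∈ ℕ, and 0 < λ < 1 so that ‖ζ(n+1) − B(n)ζ(n)‖ ≤ C for all n, ‖B(n)‖ ≤ 2 for all n (operator norm), and every composition B(n+N) ∘ ⋯ ∘ B(n) of N+1 consecutive maps has operator norm at most λ. Then the sequence (‖ζ(n)‖) is bounded. -/
/-!
Write `Q(m, n) = B(n+m-1) ∘ ⋯ ∘ B(n)`. Iterating `ζ(k+1) = B(k) ζ(k) + O(C)` over a block of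
`m` steps gives `ζ(n+m) = Q(m, n) ζ(n) + O(C (2^m - 1))`, because each error is amplified by at
most `‖B‖ ≤ 2` per later step. Over blocks of length `N + 1` this yields
`‖ζ(n+N+1)‖ ≤ λ ‖ζ(n)‖ + D` with `D = C (2^(N+1) - 1)`, and since `λ < 1` such an affine
contraction keeps `‖ζ‖` below `max (sup_{k ≤ N} ‖ζ(k)‖) (D / (1 - λ))`.
-/

open Finset

/-- `blockProd B m n = B (n + m - 1) * ⋯ * B (n + 1) * B n`. -/
def blockProd {M : Type*} [Monoid M] (B : ℕ → M) : ℕ → ℕ → M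
  | 0, _ => 1
  | m + 1, n => B (n + m) * blockProd B m n

theorem blockProd_eq_prod_map_range {M : Type*} [Monoid M] (B : ℕ → M) (m n : ℕ) :
    blockProd B m n = ((List.range m).map fun k => B (n + m - 1 - k)).prod := by
  induction m with
  | zero => rfl
  | succ m ih =>
    rw [blockProd, ih, List.range_succ_eq_map, List.map_cons, List.map_map, List.prod_cons]
    congr 2
    refine List.map_congr_left fun k _ => ?_
    simp only [Function.comp_apply, Nat.succ_eq_add_one]
    congr 1
    omega

section Perturbation

variable {𝕜 E : Type*} [NontriviallyNormedField 𝕜] [SeminormedAddCommGroup E] [NormedSpace 𝕜 E]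
  {x : ℕ → E} {B : ℕ → E →L[𝕜] E} {C L : ℝ}

theorem norm_sub_blockProd_apply_le (hrec : ∀ n, ‖x (n + 1) - B n (x n)‖ ≤ C)
    (hB : ∀ n, ‖B n‖ ≤ L) (m n : ℕ) :
    ‖x (n + m) - blockProd B m n (x n)‖ ≤ C * ∑ i ∈ range m, L ^ i := by
  induction m with
  | zero => simp [blockProd]
  | succ m ih =>
    have hsplit : x (n + (m + 1)) - blockProd B (m + 1) n (x n)
        = (x (n + m + 1) - B (n + m) (x (n + m)))
          + B (n + m) (x (n + m) - blockProd B m n (x n)) := by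
      rw [blockProd, mul_apply_eq_comp, map_sub, ← add_assoc]
      abel
    have hamplify : ‖B (n + m) (x (n + m) - blockProd B m n (x n))‖
        ≤ L * (C * ∑ i ∈ range m, L ^ i) :=
      ((B (n + m)).le_opNorm _).trans
        (mul_le_mul (hB _) ih (norm_nonneg _) ((norm_nonneg _).trans (hB 0)))
    calc ‖x (n + (m + 1)) - blockProd B (m + 1) n (x n)‖
        ≤ C + L * (C * ∑ i ∈ range m, L ^ i) :=
          hsplit ▸ (norm_add_le _ _).trans (add_le_add (hrec _) hamplify)
      _ = C * ∑ i ∈ range (m + 1), L ^ i := by rw [geom_sum_succ]; ring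

theorem norm_le_opNorm_blockProd_mul_add (hrec : ∀ n, ‖x (n + 1) - B n (x n)‖ ≤ C)
    (hB : ∀ n, ‖B n‖ ≤ L) (m n : ℕ) :
    ‖x (n + m)‖ ≤ ‖blockProd B m n‖ * ‖x n‖ + C * ∑ i ∈ range m, L ^ i :=
  (norm_le_insert' _ (blockProd B m n (x n))).trans
    (add_le_add ((blockProd B m n).le_opNorm _) (norm_sub_blockProd_apply_le hrec hB m n))

end Perturbation

theorem exists_forall_le_of_le_mul_add {a : ℕ → ℝ} {p : ℕ} {lam D : ℝ} (hp : 0 < p)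
    (hlam0 : 0 ≤ lam) (hlam1 : lam < 1) (ha : ∀ n, a (n + p) ≤ lam * a n + D) :
    ∃ M, ∀ n, a n ≤ M := by
  obtain ⟨M₀, hM₀⟩ : BddAbove (a '' Set.Iio p) := ((Set.finite_Iio p).image a).bddAbove
  have hfixed : lam * max M₀ (D / (1 - lam)) + D ≤ max M₀ (D / (1 - lam)) := by
    have hD : D ≤ (1 - lam) * max M₀ (D / (1 - lam)) :=
      (div_le_iff₀' (sub_pos.mpr hlam1)).mp (le_max_right _ _)
    linarith
  refine ⟨max M₀ (D / (1 - lam)), fun n => ?_⟩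
  induction n using Nat.strong_induction_on with
  | _ n ih =>
    rcases lt_or_ge n p with hn | hn
    · exact (hM₀ (Set.mem_image_of_mem a hn)).trans (le_max_left _ _)
    · obtain ⟨k, rfl⟩ := Nat.exists_eq_add_of_le' hn
      calc a (k + p) ≤ lam * a k + D := ha k
        _ ≤ lam * max M₀ (D / (1 - lam)) + D := by gcongr; exact ih k (by omega)
        _ ≤ max M₀ (D / (1 - lam)) := hfixed

theorem stmt_8_general
    (ζ : ℕ → EuclideanSpace ℝ (Fin 2))
    (B : ℕ → (EuclideanSpace ℝ (Fin 2) →L[ℝ] EuclideanSpace ℝ (Fin 2)))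
    (C : ℝ)
    (hrec : ∀ n, ‖ζ (n + 1) - B n (ζ n)‖ ≤ C)
    (hBnorm : ∀ n, ‖B n‖ ≤ 2)
    (N : ℕ) (lam : ℝ) (hlam1 : lam < 1)
    (hcontr : ∀ n, ‖(((List.range (N + 1)).map fun k => B (n + N - k)).prod)‖ ≤ lam) :
    ∃ M : ℝ, ∀ n, ‖ζ n‖ ≤ M := by
  have hblock : ∀ n, ‖blockProd B (N + 1) n‖ ≤ lam := fun n => by
    simpa [blockProd_eq_prod_map_range] using hcontr n
  refine exists_forall_le_of_le_mul_add N.succ_pos ((norm_nonneg _).trans (hcontr 0)) hlam1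
    (D := C * ∑ i ∈ range (N + 1), (2 : ℝ) ^ i) fun n => ?_
  calc ‖ζ (n + (N + 1))‖
      ≤ ‖blockProd B (N + 1) n‖ * ‖ζ n‖ + C * ∑ i ∈ range (N + 1), (2 : ℝ) ^ i :=
        norm_le_opNorm_blockProd_mul_add hrec hBnorm (N + 1) n
    _ ≤ lam * ‖ζ n‖ + C * ∑ i ∈ range (N + 1), (2 : ℝ) ^ i := by gcongr; exact hblock n

theorem stmt_8 (s : ℕ → ℝ)
    (ζ : ℕ → EuclideanSpace ℝ (Fin 2))
    (hζ : ∀ n, ζ n 0 = s n ∧ ζ n 1 = s (n - 1))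
    (B : ℕ → (EuclideanSpace ℝ (Fin 2) →L[ℝ] EuclideanSpace ℝ (Fin 2)))
    (C : ℝ) (hC : 0 < C)
    (hrec : ∀ n, ‖ζ (n + 1) - B n (ζ n)‖ ≤ C)
    (hBnorm : ∀ n, ‖B n‖ ≤ 2)
    (N : ℕ) (lam : ℝ) (hlam0 : 0 < lam) (hlam1 : lam < 1)
    (hcontr : ∀ n, ‖(((List.range (N + 1)).map fun k => B (n + N - k)).prod)‖ ≤ lam) :
    ∃ M : ℝ, ∀ n, ‖ζ n‖ ≤ M :=
  stmt_8_general ζ B C hrec hBnorm N lam hlam1 hcontr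
end

section
/- Let (s(n)) be a non-negative real sequence, ν > 2, and suppose there exist a bound C > 0 and sequences a(n) of positive integers with 1 ≤ a(n) ≤ A such that |s(n+1) − ((1 − ν^(−a(n)))/(ν − 1))·s(n) − ν^(−a(n−1))·s(n−1)| ≤ C for all n. Then (s(n)) is bounded. -/
/-!
Weight the previous term: `V n = s n + κ q n s (n - 1)` with `q n = ν ^ (-a (n - 1))`,
`κ = 2ν / (ν + 2)` and `θ = κ⁻¹ = (ν + 2) / (2ν) < 1`. Since `ν ^ (-a n) ≤ 1/ν` and `ν > 2`,
the recursion gives `V (n + 1) ≤ θ V n + C`, so `V`, and with it `s ≤ V`, stays below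
`max (V 0) (C / (1 - θ))`.
-/

theorem le_max_of_succ_le_mul_add {V : ℕ → ℝ} {θ C : ℝ} (hθ0 : 0 ≤ θ) (hθ1 : θ < 1)
    (hstep : ∀ n, V (n + 1) ≤ θ * V n + C) (n : ℕ) : V n ≤ max (V 0) (C / (1 - θ)) := by
  induction n with
  | zero => exact le_max_left _ _
  | succ k ih =>
    set M := max (V 0) (C / (1 - θ))
    have hC : C ≤ (1 - θ) * M := by
      rw [← div_le_iff₀' (by linarith)]
      exact le_max_right _ _
    calc V (k + 1) ≤ θ * V k + C := hstep k
      _ ≤ θ * M + (1 - θ) * M := by gcongr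
      _ = M := by ring

section TwoStep

variable {s p q : ℕ → ℝ} {θ κ C : ℝ}

theorem succ_le_mul_add_of_two_step (hs : ∀ n, 0 ≤ s n) (hq : ∀ n, 0 ≤ q n)
    (hθκ : 1 ≤ θ * κ) (hcoef : ∀ n, p n + κ * q (n + 1) ≤ θ)
    (hrec : ∀ n, s (n + 1) ≤ p n * s n + q n * s (n - 1) + C) (n : ℕ) :
    s (n + 1) + κ * q (n + 1) * s n ≤ θ * (s n + κ * q n * s (n - 1)) + C := by
  have hprev : q n * s (n - 1) ≤ θ * κ * (q n * s (n - 1)) :=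
    le_mul_of_one_le_left (mul_nonneg (hq n) (hs _)) hθκ
  have hcur : (p n + κ * q (n + 1)) * s n ≤ θ * s n :=
    mul_le_mul_of_nonneg_right (hcoef n) (hs n)
  linarith [hrec n]

theorem exists_forall_le_of_two_step (hs : ∀ n, 0 ≤ s n) (hq : ∀ n, 0 ≤ q n)
    (hθ0 : 0 ≤ θ) (hθ1 : θ < 1) (hθκ : 1 ≤ θ * κ) (hcoef : ∀ n, p n + κ * q (n + 1) ≤ θ)
    (hrec : ∀ n, s (n + 1) ≤ p n * s n + q n * s (n - 1) + C) : ∃ M, ∀ n, s n ≤ M := by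
  set V : ℕ → ℝ := fun n ↦ s n + κ * q n * s (n - 1)
  have hκ : 0 ≤ κ := by nlinarith
  have hsV : ∀ n, s n ≤ V n := fun n ↦
    le_add_of_nonneg_right (mul_nonneg (mul_nonneg hκ (hq n)) (hs _))
  exact ⟨_, fun n ↦ (hsV n).trans <| le_max_of_succ_le_mul_add hθ0 hθ1
    (succ_le_mul_add_of_two_step hs hq hθκ hcoef hrec) n⟩

end TwoStep

theorem rpow_neg_natCast_le_inv {ν : ℝ} (hν : 1 ≤ ν) {k : ℕ} (hk : 1 ≤ k) :
    ν ^ (-(k : ℝ)) ≤ ν⁻¹ := by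
  rw [← Real.rpow_neg_one]
  exact Real.rpow_le_rpow_of_exponent_le hν (by simpa using hk)

-- The left side is affine in `x` with slope `(2ν + 1)(ν - 2) / ((ν - 1)(ν + 2)) ≥ 0`,
-- and at `x = ν⁻¹` it falls short of the right side by `(ν - 2) / (2(ν + 2))`.
theorem one_sub_div_add_mul_le {ν x : ℝ} (hν : 2 ≤ ν) (hx : x ≤ ν⁻¹) :
    (1 - x) / (ν - 1) + 2 * ν / (ν + 2) * x ≤ (ν + 2) / (2 * ν) := by
  have hν0 : 0 < ν := by linarith
  have hν1 : 0 < ν - 1 := by linarith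
  have hxν : x * ν ≤ 1 :=
    calc x * ν ≤ ν⁻¹ * ν := by gcongr
      _ = 1 := inv_mul_cancel₀ hν0.ne'
  rw [div_add' _ _ _ hν1.ne', div_le_div_iff₀ (by positivity) (by positivity)]
  field_simp
  nlinarith [mul_nonneg (mul_nonneg (sub_nonneg.2 hxν) (by linarith : (0 : ℝ) ≤ 2 * ν + 1))
    (sub_nonneg.2 hν), mul_nonneg (mul_nonneg (sub_nonneg.2 hν) hν0.le) hν1.le]

theorem stmt_9_general (ν : ℝ) (hν : 2 < ν) (A : ℕ)
    (a : ℕ → ℕ) (ha : ∀ n, 1 ≤ a n ∧ a n ≤ A)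
    (s : ℕ → ℝ) (hs : ∀ n, 0 ≤ s n)
    (C : ℝ)
    (hrec : ∀ n, |s (n + 1) - (1 - ν ^ (-(a n : ℝ))) / (ν - 1) * s n
      - ν ^ (-(a (n - 1) : ℝ)) * s (n - 1)| ≤ C) :
    ∃ M : ℝ, ∀ n, s n ≤ M := by
  refine exists_forall_le_of_two_step (p := fun n ↦ (1 - ν ^ (-(a n : ℝ))) / (ν - 1))
    (q := fun n ↦ ν ^ (-(a (n - 1) : ℝ))) (θ := (ν + 2) / (2 * ν)) (κ := 2 * ν / (ν + 2))
    (C := C) hs (fun n ↦ by positivity) (by positivity) ?_ ?_ (fun n ↦ ?_) (fun n ↦ ?_)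
  · rw [div_lt_one (by linarith)]; linarith
  · rw [div_mul_div_comm, mul_comm (ν + 2), div_self (by positivity)]
  · exact one_sub_div_add_mul_le hν.le (rpow_neg_natCast_le_inv (by linarith) (ha n).1)
  · linarith [(abs_le.mp (hrec n)).2]

theorem stmt_9 (ν : ℝ) (hν : 2 < ν) (A : ℕ) (hA : 1 ≤ A)
    (a : ℕ → ℕ) (ha : ∀ n, 1 ≤ a n ∧ a n ≤ A)
    (s : ℕ → ℝ) (hs : ∀ n, 0 ≤ s n)
    (C : ℝ) (hC : 0 < C)
    (hrec : ∀ n, |s (n + 1) - (1 - ν ^ (-(a n : ℝ))) / (ν - 1) * s n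
      - ν ^ (-(a (n - 1) : ℝ)) * s (n - 1)| ≤ C) :
    ∃ M : ℝ, ∀ n, s n ≤ M :=
  stmt_9_general ν hν A a ha s hs C hrec
end

section
/- Let ν > 2, A ≥ 1 an integer, K ≥ 1, and suppose a sequence of positive reals σ(n) ≤ 1 satisfies the recursion bounds of Proposition 3.1 with 1 ≤ a(n) ≤ A and |p| ≤ A (as in the previous statement). Then lim inf σ(n) > 0. -/
set_option maxHeartbeats 1000000 in
theorem stmt_12 (ν : ℝ) (hν : 2 < ν) (K : ℝ) (hK : 1 ≤ K)
    (A : ℕ) (hA : 1 ≤ A)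
    (a : ℕ → ℕ) (ha : ∀ n, 1 ≤ a n ∧ a n ≤ A)
    (p : ℕ → ℤ) (hp : ∀ n, |p n| ≤ (A : ℤ))
    (σ : ℕ → ℝ) (hσ : ∀ n, 0 < σ n ∧ σ n ≤ 1)
    (hrec : ∀ n,
      (1 / K) * ν ^ (p n : ℝ) * σ n ^ ((1 - ν ^ (a n : ℝ)) / (1 - ν)) * σ (n - 1)
        ≤ σ (n + 1) ^ (ν ^ (a (n + 1) : ℝ)) ∧
      σ (n + 1) ^ (ν ^ (a (n + 1) : ℝ))
        ≤ K * ν ^ (p n : ℝ) * σ n ^ ((1 - ν ^ (a n : ℝ)) / (1 - ν)) * σ (n - 1)) :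
    0 < Filter.liminf σ Filter.atTop := by
  have hν0 : (0:ℝ) < ν := by linarith
  have hν1 : (1:ℝ) < ν := by linarith
  have hK0 : (0:ℝ) < K := by linarith
  have hlogν : 0 ≤ Real.log ν := Real.log_nonneg (by linarith)
  obtain ⟨x, hxdef⟩ : ∃ x : ℕ → ℝ, ∀ n, x n = -Real.log (σ n) := ⟨_, fun _ => rfl⟩
  have hx0 : ∀ n, 0 ≤ x n := fun n => by
    rw [hxdef, neg_nonneg]
    exact Real.log_nonpos (hσ n).1.le (hσ n).2
  obtain ⟨L, hLdef⟩ : ∃ L : ℝ, L = Real.log K + (A:ℝ) * Real.log ν := ⟨_, rfl⟩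
  have hL0 : 0 ≤ L := by
    have h1 : 0 ≤ Real.log K := Real.log_nonneg hK
    have h2 : (0:ℝ) ≤ (A:ℝ) := Nat.cast_nonneg A
    rw [hLdef]; positivity
  have hSν : ∀ n, ν ≤ ν ^ ((a n : ℕ) : ℝ) := fun n => by
    calc ν = ν ^ (1:ℝ) := (Real.rpow_one ν).symm
    _ ≤ ν ^ ((a n : ℕ) : ℝ) := by
      apply Real.rpow_le_rpow_left_iff hν1 |>.mpr
      exact_mod_cast (ha n).1
  -- key log inequality
  have key : ∀ n, ν ^ ((a (n+1) : ℕ) : ℝ) * x (n+1) ≤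
      (ν ^ ((a n : ℕ) : ℝ) - 1) / (ν - 1) * x n + x (n - 1) + L := by
    intro n
    have h1 := (hrec n).1
    have hσn := (hσ n).1
    have hσn1 := (hσ (n+1)).1
    have hσm := (hσ (n-1)).1
    have hνp : (0:ℝ) < ν ^ ((p n : ℤ) : ℝ) := Real.rpow_pos_of_pos hν0 _
    have hσc : (0:ℝ) < σ n ^ ((1 - ν ^ (a n : ℝ)) / (1 - ν)) := Real.rpow_pos_of_pos hσn _
    have hlhs : (0:ℝ) < (1 / K) * ν ^ (p n : ℝ) * σ n ^ ((1 - ν ^ (a n : ℝ)) / (1 - ν)) * σ (n - 1) := by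
      positivity
    have hlog := Real.log_le_log hlhs h1
    rw [Real.log_rpow hσn1, Real.log_mul (by positivity) hσm.ne',
        Real.log_mul (by positivity) hσc.ne', Real.log_mul (by positivity) hνp.ne',
        Real.log_rpow hσn, Real.log_rpow hν0, Real.log_div one_ne_zero hK0.ne',
        Real.log_one] at hlog
    have hceq : (1 - ν ^ ((a n : ℕ) : ℝ)) / (1 - ν) = (ν ^ ((a n : ℕ) : ℝ) - 1) / (ν - 1) := by
      rw [← neg_div_neg_eq]; ring_nf
    have hpA : -(p n : ℝ) ≤ (A : ℝ) := by
      have h2 := (abs_le.mp (hp n)).1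
      exact_mod_cast (by linarith : -(p n : ℤ) ≤ (A:ℤ))
    have hplog : -((p n : ℝ) * Real.log ν) ≤ (A:ℝ) * Real.log ν := by
      have := mul_le_mul_of_nonneg_right hpA hlogν
      linarith
    rw [hceq] at hlog
    rw [hxdef (n+1), hxdef n, hxdef (n-1), hLdef]
    nlinarith [hlog]
  -- constants
  obtain ⟨γ, hγdef⟩ : ∃ γ : ℝ, γ = ν / 2 := ⟨_, rfl⟩
  obtain ⟨r, hrdef⟩ : ∃ r : ℝ, r = max (1/2 + 1/ν) (1/(ν-1)) := ⟨_, rfl⟩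
  have hγ0 : 0 < γ := by rw [hγdef]; linarith
  have hr1 : r < 1 := by
    rw [hrdef]
    apply max_lt
    · rw [div_add_div _ _ (by norm_num) (by linarith), div_lt_one (by linarith)]; linarith
    · rw [div_lt_one (by linarith)]; linarith
  have hr2 : 1/2 + 1/ν ≤ r := hrdef ▸ le_max_left _ _
  have hr3 : 1/(ν-1) ≤ r := hrdef ▸ le_max_right _ _
  have hr0 : 0 < r := lt_of_lt_of_le (div_pos one_pos (by linarith)) hr3
  have hν1' : ν - 1 ≠ 0 := by linarith
  have hrγ : 1 ≤ r * γ := by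
    have h1 : (1/2 + 1/ν) * γ ≤ r * γ := mul_le_mul_of_nonneg_right hr2 hγ0.le
    have h2 : (1/2 + 1/ν) * (ν/2) = ν/4 + 1/2 := by field_simp; ring
    rw [hγdef] at h1
    nlinarith
  -- Lyapunov function
  obtain ⟨V, hVdef⟩ : ∃ V : ℕ → ℝ, ∀ n, V n = ν ^ ((a n : ℕ) : ℝ) * x n + γ * x (n - 1) :=
    ⟨_, fun _ => rfl⟩
  have hV0 : ∀ n, 0 ≤ V n := fun n => by
    have h1 := hx0 n; have h2 := hx0 (n-1)
    have h3 : (0:ℝ) < ν ^ ((a n : ℕ) : ℝ) := Real.rpow_pos_of_pos hν0 _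
    rw [hVdef]; positivity
  have hVrec : ∀ n, V (n+1) ≤ r * V n + L := by
    intro n
    have hk := key n
    have hS := hSν n
    have hcγ : (ν ^ ((a n : ℕ) : ℝ) - 1)/(ν-1) + γ ≤ r * ν ^ ((a n : ℕ) : ℝ) := by
      set S := ν ^ ((a n : ℕ) : ℝ) with hSdef
      have h1 : r * S - (S - 1)/(ν-1) = S * (r - 1/(ν-1)) + 1/(ν-1) := by
        field_simp; ring
      have h2 : ν * (r - 1/(ν-1)) ≤ S * (r - 1/(ν-1)) :=
        mul_le_mul_of_nonneg_right hS (by linarith)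
      have h3 : ν * (r - 1/(ν-1)) + 1/(ν-1) = ν * r - 1 := by field_simp; ring
      have h4 : ν * (1/2 + 1/ν) ≤ ν * r := mul_le_mul_of_nonneg_left hr2 (by linarith)
      have h5 : ν * (1/2 + 1/ν) = ν/2 + 1 := by field_simp
      rw [hγdef]
      linarith
    have hxn := hx0 n; have hxm := hx0 (n-1)
    rw [hVdef (n+1), hVdef n, Nat.add_sub_cancel]
    have b1 : ((ν ^ ((a n : ℕ) : ℝ) - 1)/(ν-1) + γ) * x n ≤ (r * ν ^ ((a n : ℕ) : ℝ)) * x n :=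
      mul_le_mul_of_nonneg_right hcγ hxn
    have b2 : x (n-1) ≤ (r * γ) * x (n-1) := by
      nlinarith [mul_le_mul_of_nonneg_right hrγ hxm]
    rw [add_mul] at b1
    nlinarith [hk, b1, b2]
  -- boundedness
  obtain ⟨B, hBdef⟩ : ∃ B : ℝ, B = V 0 + L / (1 - r) := ⟨_, rfl⟩
  have hdnn : 0 ≤ L / (1 - r) := div_nonneg hL0 (by linarith)
  have hVB : ∀ n, V n ≤ B := by
    intro n
    induction n with
    | zero => rw [hBdef]; linarith
    | succ k ih =>
      have h0 := hVrec k
      have h1 : r * V k ≤ r * B := mul_le_mul_of_nonneg_left ih hr0.le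
      have h2 : r * B + L ≤ B := by
        have hr1' : (1:ℝ) - r ≠ 0 := by linarith
        have h3 : r * (L / (1-r)) + L = L / (1-r) := by field_simp; ring
        have hV00 : 0 ≤ V 0 := hV0 0
        have h4 : r * V 0 ≤ V 0 := by nlinarith
        rw [hBdef]
        nlinarith [h3, h4]
      linarith
  have hxB : ∀ n, x n ≤ B := by
    intro n
    have h1 : (1:ℝ) ≤ ν ^ ((a n : ℕ) : ℝ) := le_trans (by linarith) (hSν n)
    have h2 : x n ≤ ν ^ ((a n : ℕ) : ℝ) * x n := le_mul_of_one_le_left (hx0 n) h1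
    have h3 : 0 ≤ γ * x (n-1) := mul_nonneg hγ0.le (hx0 (n-1))
    have h4 := hVB n
    rw [hVdef] at h4
    linarith
  have hσlb : ∀ n, Real.exp (-B) ≤ σ n := by
    intro n
    have h1 : -B ≤ Real.log (σ n) := by
      have h2 := hxB n; rw [hxdef] at h2; linarith
    calc Real.exp (-B) ≤ Real.exp (Real.log (σ n)) := Real.exp_le_exp.mpr h1
    _ = σ n := Real.exp_log (hσ n).1
  have hcb : Filter.IsCoboundedUnder (· ≥ ·) Filter.atTop σ := by
    apply Filter.IsBoundedUnder.isCoboundedUnder_ge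
    exact Filter.isBoundedUnder_of ⟨1, fun n => (hσ n).2⟩
  have hle : Real.exp (-B) ≤ Filter.liminf σ Filter.atTop :=
    Filter.le_liminf_of_le hcb (Filter.Eventually.of_forall hσlb)
  exact lt_of_lt_of_le (Real.exp_pos _) hle
end

section
/- Let Ω ⊆ [0,1] be covered for each n by a finite collection 𝒞_n of intervals ('holes') with the property: each hole H ∈ 𝒞_{n-1} contains at most A+1 holes of 𝒞_n, whose total length is at most β·|H| for a fixed β < 1, and every hole of 𝒞_n is contained in a hole of 𝒞_{n−1}; moreover the maximal hole length tends to 0. If α ∈ (0,1) satisfies (A+1)^(1−α)·β^α ≤ 1, then the α-dimensional Hausdorff measure of Ω is finite, so the Hausdorff dimension of Ω is at most α, which is strictly less than 1. -/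
open MeasureTheory
open scoped Classical ENNReal NNReal

private lemma sum_rpow_le_aux {ι : Type*} (s : Finset ι) (a : ι → ℝ)
    (ha : ∀ i ∈ s, 0 ≤ a i) {α : ℝ} (hα0 : 0 < α) (hα1 : α ≤ 1) :
    ∑ i ∈ s, a i ^ α ≤ (s.card : ℝ) ^ (1 - α) * (∑ i ∈ s, a i) ^ α := by
  have hα0' : (0:ℝ) < 1/α := by positivity
  have hp : (1:ℝ) ≤ 1/α := by
    rw [le_div_iff₀ hα0]; linarith
  have key := Real.rpow_sum_le_const_mul_sum_rpow_of_nonneg (s := s)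
      (f := fun i => a i ^ α) hp (fun i hi => Real.rpow_nonneg (ha i hi) α)
  have hsimp : ∀ i ∈ s, (a i ^ α) ^ (1/α) = a i := by
    intro i hi
    rw [← Real.rpow_mul (ha i hi), mul_one_div, div_self hα0.ne', Real.rpow_one]
  rw [Finset.sum_congr rfl hsimp] at key
  have hS : 0 ≤ ∑ i ∈ s, a i ^ α := Finset.sum_nonneg fun i hi => Real.rpow_nonneg (ha i hi) α
  have h2 : ((∑ i ∈ s, a i ^ α) ^ (1/α)) ^ α ≤
      ((s.card : ℝ) ^ (1/α - 1) * ∑ i ∈ s, a i) ^ α := by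
    apply Real.rpow_le_rpow (Real.rpow_nonneg hS _) key hα0.le
  have h3 : ((∑ i ∈ s, a i ^ α) ^ (1/α)) ^ α = ∑ i ∈ s, a i ^ α := by
    rw [← Real.rpow_mul hS, one_div, inv_mul_cancel₀ hα0.ne', Real.rpow_one]
  have hcn : (0:ℝ) ≤ (s.card : ℝ) := Nat.cast_nonneg _
  have h4 : ((s.card : ℝ) ^ (1/α - 1) * ∑ i ∈ s, a i) ^ α =
      (s.card : ℝ) ^ (1 - α) * (∑ i ∈ s, a i) ^ α := by
    rw [Real.mul_rpow (Real.rpow_nonneg hcn _) (Finset.sum_nonneg ha),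
      ← Real.rpow_mul hcn]
    congr 2
    field_simp
  rw [h3, h4] at h2
  exact h2

private lemma sum_biUnion_le_aux {ι κ : Type*} [DecidableEq κ] (s : Finset ι)
    (t : ι → Finset κ) (f : κ → ℝ) :
    (∀ x ∈ s.biUnion t, 0 ≤ f x) → ∑ x ∈ s.biUnion t, f x ≤ ∑ i ∈ s, ∑ x ∈ t i, f x := by
  classical
  induction s using Finset.induction_on with
  | empty => intro _; simp
  | @insert i s' h ih =>
    intro hf'
    have hfu : ∀ x ∈ t i ∪ s'.biUnion t, 0 ≤ f x := by
      intro x hx; exact hf' x (by rwa [Finset.biUnion_insert])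
    rw [Finset.biUnion_insert, Finset.sum_insert h]
    have hunion : ∑ x ∈ t i ∪ s'.biUnion t, f x ≤
        ∑ x ∈ t i, f x + ∑ x ∈ s'.biUnion t, f x := by
      rw [← Finset.sum_union_inter]
      have h0 : 0 ≤ ∑ x ∈ t i ∩ s'.biUnion t, f x := Finset.sum_nonneg fun x hx =>
        hfu x (Finset.mem_union_left _ (Finset.mem_inter.1 hx).1)
      linarith
    have hrest : ∑ x ∈ s'.biUnion t, f x ≤ ∑ i ∈ s', ∑ x ∈ t i, f x :=
      ih (fun x hx => hfu x (Finset.mem_union_right _ hx))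
    exact hunion.trans (by linarith)

theorem stmt_15 (Ω : Set ℝ) (A : ℕ) (β : ℝ) (hβ0 : 0 < β) (hβ1 : β < 1)
    (𝒞 : ℕ → Finset (ℝ × ℝ))
    (hne : ∀ n, ∀ H ∈ 𝒞 n, H.1 ≤ H.2)
    (hcover : ∀ n, Ω ⊆ ⋃ H ∈ (𝒞 n : Set (ℝ × ℝ)), Set.Icc H.1 H.2)
    (hnest : ∀ n, ∀ H' ∈ 𝒞 (n + 1), ∃ H ∈ 𝒞 n, Set.Icc H'.1 H'.2 ⊆ Set.Icc H.1 H.2)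
    (hcard : ∀ n, ∀ H ∈ 𝒞 n,
      ((𝒞 (n + 1)).filter fun H' => Set.Icc H'.1 H'.2 ⊆ Set.Icc H.1 H.2).card ≤ A + 1)
    (hsum : ∀ n, ∀ H ∈ 𝒞 n,
      ∑ H' ∈ (𝒞 (n + 1)).filter (fun H' => Set.Icc H'.1 H'.2 ⊆ Set.Icc H.1 H.2),
        (H'.2 - H'.1) ≤ β * (H.2 - H.1))
    (hsmall : ∀ ε > 0, ∃ N, ∀ n ≥ N, ∀ H ∈ 𝒞 n, H.2 - H.1 ≤ ε)
    (α : ℝ) (hα0 : 0 < α) (hα1 : α < 1)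
    (hαβ : ((A : ℝ) + 1) ^ (1 - α) * β ^ α ≤ 1) :
    μH[α] Ω < ⊤ ∧ dimH Ω ≤ ENNReal.ofReal α ∧ ENNReal.ofReal α < 1 := by
  classical
  set ℓ : ℝ × ℝ → ℝ := fun H => H.2 - H.1 with hℓ
  set g : ℝ × ℝ → ℝ := fun H => ℓ H ^ α with hg
  have hgnn : ∀ n, ∀ H ∈ 𝒞 n, 0 ≤ g H := fun n H hH =>
    Real.rpow_nonneg (sub_nonneg.2 (hne n H hH)) α
  set S : ℕ → ℝ := fun n => ∑ H ∈ 𝒞 n, g H with hS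
  -- Step A: per-hole inequality
  have stepA : ∀ n, ∀ H ∈ 𝒞 n,
      ∑ H' ∈ (𝒞 (n + 1)).filter (fun H' => Set.Icc H'.1 H'.2 ⊆ Set.Icc H.1 H.2), g H'
        ≤ g H := by
    intro n H hH
    set s := (𝒞 (n + 1)).filter (fun H' => Set.Icc H'.1 H'.2 ⊆ Set.Icc H.1 H.2) with hs
    have hann : ∀ H' ∈ s, 0 ≤ ℓ H' := fun H' hH' =>
      sub_nonneg.2 (hne (n+1) H' (Finset.mem_filter.1 hH').1)
    have h1 : ∑ H' ∈ s, g H' ≤ (s.card : ℝ) ^ (1 - α) * (∑ H' ∈ s, ℓ H') ^ α :=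
      sum_rpow_le_aux s ℓ hann hα0 hα1.le
    have hHnn : 0 ≤ ℓ H := sub_nonneg.2 (hne n H hH)
    have hsumnn : 0 ≤ ∑ H' ∈ s, ℓ H' := Finset.sum_nonneg hann
    have h2 : (∑ H' ∈ s, ℓ H') ^ α ≤ (β * ℓ H) ^ α :=
      Real.rpow_le_rpow hsumnn (hsum n H hH) hα0.le
    have h3 : (s.card : ℝ) ^ (1 - α) ≤ ((A:ℝ) + 1) ^ (1 - α) := by
      apply Real.rpow_le_rpow (Nat.cast_nonneg _) _ (by linarith)
      exact_mod_cast hcard n H hH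
    have h4 : (β * ℓ H) ^ α = β ^ α * ℓ H ^ α := Real.mul_rpow hβ0.le hHnn
    calc ∑ H' ∈ s, g H' ≤ (s.card : ℝ) ^ (1 - α) * (∑ H' ∈ s, ℓ H') ^ α := h1
      _ ≤ ((A:ℝ) + 1) ^ (1 - α) * (β * ℓ H) ^ α := by
          apply mul_le_mul h3 h2 (Real.rpow_nonneg hsumnn α) (Real.rpow_nonneg (by positivity) _)
      _ = (((A:ℝ) + 1) ^ (1 - α) * β ^ α) * ℓ H ^ α := by rw [h4]; ring
      _ ≤ 1 * ℓ H ^ α := by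
          apply mul_le_mul_of_nonneg_right hαβ (Real.rpow_nonneg hHnn α)
      _ = g H := by rw [one_mul]
  -- Step B: S is antitone in steps
  have stepB : ∀ n, S (n + 1) ≤ S n := by
    intro n
    have hsub : 𝒞 (n + 1) ⊆ (𝒞 n).biUnion
        (fun H => (𝒞 (n + 1)).filter (fun H' => Set.Icc H'.1 H'.2 ⊆ Set.Icc H.1 H.2)) := by
      intro H' hH'
      obtain ⟨H, hH, hsubs⟩ := hnest n H' hH'
      exact Finset.mem_biUnion.2 ⟨H, hH, Finset.mem_filter.2 ⟨hH', hsubs⟩⟩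
    calc S (n + 1) = ∑ H' ∈ 𝒞 (n + 1), g H' := rfl
      _ ≤ ∑ H' ∈ (𝒞 n).biUnion
            (fun H => (𝒞 (n + 1)).filter (fun H' => Set.Icc H'.1 H'.2 ⊆ Set.Icc H.1 H.2)),
            g H' :=
          Finset.sum_le_sum_of_subset_of_nonneg hsub (fun H' hH' _ =>
            hgnn (n+1) H' (Finset.mem_filter.1 (Finset.mem_biUnion.1 hH').choose_spec.2).1)
      _ ≤ ∑ H ∈ 𝒞 n, ∑ H' ∈ (𝒞 (n + 1)).filter
            (fun H' => Set.Icc H'.1 H'.2 ⊆ Set.Icc H.1 H.2), g H' :=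
          sum_biUnion_le_aux _ _ g (fun H' hH' =>
            hgnn (n+1) H' (Finset.mem_filter.1 (Finset.mem_biUnion.1 hH').choose_spec.2).1)
      _ ≤ ∑ H ∈ 𝒞 n, g H := Finset.sum_le_sum (fun H hH => stepA n H hH)
      _ = S n := rfl
  have stepC : ∀ n, S n ≤ S 0 := by
    intro n
    induction n with
    | zero => exact le_refl _
    | succ k ih => exact (stepB k).trans ih
  -- the covering families
  set r : ℕ → ℝ≥0∞ := fun n => (𝒞 n).sup (fun H => ENNReal.ofReal (ℓ H)) with hr
  have hrt : Filter.Tendsto r Filter.atTop (nhds 0) := by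
    rw [ENNReal.tendsto_atTop_zero]
    intro ε hε
    rcases eq_or_ne ε ⊤ with hT | hT
    · exact ⟨0, fun n _ => hT ▸ le_top⟩
    · have hε' : 0 < ε.toReal := ENNReal.toReal_pos hε.ne' hT
      obtain ⟨N, hN⟩ := hsmall ε.toReal hε'
      refine ⟨N, fun n hn => Finset.sup_le fun H hH => ?_⟩
      exact ENNReal.ofReal_le_of_le_toReal (hN n hn H hH)
  have hmain : μH[α] Ω ≤ ENNReal.ofReal (S 0) := by
    have hle := MeasureTheory.Measure.hausdorffMeasure_le_liminf_sum (ι := fun n => ((𝒞 n : Finset (ℝ × ℝ)) : Type))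
        α Ω r hrt (fun n i => Set.Icc (i : ℝ × ℝ).1 (i : ℝ × ℝ).2)
        (Filter.Eventually.of_forall fun n i => by
          rw [Real.ediam_Icc]
          exact Finset.le_sup (f := fun H => ENNReal.ofReal (ℓ H)) i.2)
        (Filter.Eventually.of_forall fun n => by
          refine (hcover n).trans ?_
          rw [Set.biUnion_eq_iUnion]
          exact subset_rfl)
    refine hle.trans ?_
    apply Filter.liminf_le_of_frequently_le'
    apply Filter.Frequently.of_forall
    intro n
    have heq : (∑ i : ((𝒞 n : Finset (ℝ × ℝ)) : Type),
        Metric.ediam (Set.Icc (i : ℝ × ℝ).1 (i : ℝ × ℝ).2) ^ α) = ENNReal.ofReal (S n) := by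
      have h1 : ∀ i : ((𝒞 n : Finset (ℝ × ℝ)) : Type),
          Metric.ediam (Set.Icc (i : ℝ × ℝ).1 (i : ℝ × ℝ).2) ^ α
            = ENNReal.ofReal (g (i : ℝ × ℝ)) := by
        intro i
        rw [Real.ediam_Icc, ENNReal.ofReal_rpow_of_nonneg
          (sub_nonneg.2 (hne n _ i.2)) hα0.le]
      have h2 : (∑ i : ((𝒞 n : Finset (ℝ × ℝ)) : Type), ENNReal.ofReal (g (i : ℝ × ℝ)))
          = ∑ H ∈ 𝒞 n, ENNReal.ofReal (g H) := Finset.sum_coe_sort (𝒞 n) (fun H => ENNReal.ofReal (g H))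
      rw [Finset.sum_congr rfl (fun i _ => h1 i), h2,
        ← ENNReal.ofReal_sum_of_nonneg (fun H hH => hgnn n H hH)]
    rw [heq]
    exact ENNReal.ofReal_le_ofReal (stepC n)
  have hfin' : μH[α] Ω < ⊤ := hmain.trans_lt ENNReal.ofReal_lt_top
  refine ⟨hfin', ?_, ?_⟩
  · have hd : μH[((α.toNNReal : ℝ≥0) : ℝ)] Ω ≠ ⊤ := by
      rw [Real.coe_toNNReal α hα0.le]
      exact hfin'.ne
    exact dimH_le_of_hausdorffMeasure_ne_top hd
  · exact ENNReal.ofReal_lt_one.2 hα1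
end
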